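/- arXiv:1904.10647 — 6 statements merged into one kernel-verified Lean document; each statement's English description precedes it below -/
import Mathlib

section
/- Let X be a metric space, φ : X → ℝ a function that is Lipschitz with constant L on a neighborhood of x̄, and M ⊆ X a set containing x̄. If φ attains a local minimum on M at x̄, then for every K > L the function x ↦ φ(x) + K·d(x, M) attains an unconditional local minimum at x̄. -/
open Metric

/-- Clarke's exact penalization principle. -/
theorem clarke_penalization {X : Type*} [MetricSpace X]
    (φ : X → ℝ) (M : Set X) (xb : X) (hxbM : xb ∈ M) (L : ℝ)
    (r : ℝ) (hr : 0 < r)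
    (hLip : ∀ x ∈ ball xb r, ∀ y ∈ ball xb r, |φ x - φ y| ≤ L * dist x y)
    (hmin : ∀ x ∈ M ∩ ball xb r, φ xb ≤ φ x) :
    ∀ K : ℝ, L < K → ∃ ρ > 0, ∀ x ∈ ball xb ρ,
      φ xb ≤ φ x + K * infDist x M := by
  intro K hK
  have hxbball : xb ∈ ball xb r := mem_ball_self hr
  by_cases hK0 : 0 ≤ K
  · refine ⟨r/3, by linarith, fun x hx => ?_⟩
    have hx3 : dist x xb < r/3 := mem_ball.mp hx
    have hxr : x ∈ ball xb r := by
      rw [mem_ball]; linarith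
    refine le_of_forall_pos_le_add fun ε hε => ?_
    set δ : ℝ := min (r/3) (ε/(K+1)) with hδdef
    have hδpos : 0 < δ := lt_min (by linarith) (div_pos hε (by linarith))
    have hMne : M.Nonempty := ⟨xb, hxbM⟩
    have hinf : infDist x M < infDist x M + δ := by linarith
    obtain ⟨y, hyM, hyd⟩ := (infDist_lt_iff hMne).mp hinf
    have hinfle : infDist x M ≤ dist x xb := infDist_le_dist_of_mem hxbM
    have hδ1 : δ ≤ r/3 := min_le_left _ _
    have hδ2 : δ ≤ ε/(K+1) := min_le_right _ _
    have hyball : y ∈ ball xb r := by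
      rw [mem_ball]
      have := dist_triangle y x xb
      rw [dist_comm y x] at this
      linarith
    have h1 : φ xb ≤ φ y := hmin y ⟨hyM, hyball⟩
    have h2 : φ y - φ x ≤ L * dist x y := by
      have := hLip y hyball x hxr
      rw [dist_comm y x] at this
      exact (abs_le.mp this).2
    have hd0 : 0 ≤ dist x y := dist_nonneg
    have h3 : L * dist x y ≤ K * dist x y :=
      mul_le_mul_of_nonneg_right hK.le hd0
    have h4 : K * dist x y ≤ K * (infDist x M + δ) :=
      mul_le_mul_of_nonneg_left hyd.le hK0
    have h5 : K * δ ≤ ε := by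
      have : K * δ ≤ K * (ε/(K+1)) := mul_le_mul_of_nonneg_left hδ2 hK0
      have h6 : K * (ε/(K+1)) ≤ ε := by
        rw [mul_div_assoc', div_le_iff₀ (by linarith : (0:ℝ) < K+1)]
        nlinarith
      linarith
    nlinarith
  · push_neg at hK0
    refine ⟨r, hr, fun x hx => ?_⟩
    have hxeq : x = xb := by
      by_contra hne
      have hd : 0 < dist x xb := dist_pos.mpr hne
      have := hLip x hx xb hxbball
      have hL0 : L < 0 := by linarith
      nlinarith [abs_nonneg (φ x - φ xb)]
    subst hxeq
    simp [infDist_zero_of_mem hxbM]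
end

section
/- Let X be a complete metric space, f : X → ℝ locally Lipschitz, M ⊆ X, and let x̄ be a local minimum of f on M. Let φ : X → ℝ be a nonnegative lower semicontinuous function with φ(x̄) = 0. Then either (a) there exists λ > 0 such that λf + φ attains an unconditional local minimum at x̄, or (b) there exists a sequence x_m ∉ closure(M) converging to x̄ such that for each m the function x ↦ φ(x) + (1/m)·d(x, x_m) attains a global minimum at x_m. -/
/-!
If (a) fails, fix `c > 0` and let `L` be a Lipschitz constant of `f` near `x̄`. With `λ = c / L`
there are points `u` arbitrarily close to `x̄` with `λ f(u) + φ(u) < λ f(x̄)`, so that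
`φ(u) < c d(u, x̄)`. Ekeland's variational principle for `φ` at `u` with slope `c` gives a point
`v` minimising `φ + c d(·, v)` globally, with `φ(v) + c d(v, u) ≤ φ(u)`; in particular `v` is
within `d(u, x̄)` of `u`. Then `λ (f(v) - f(u)) ≤ c d(v, u) ≤ φ(u) < λ (f(x̄) - f(u))`, so
`f(v) < f(x̄)`, and since `x̄` also minimises the continuous `f` on `closure M` near `x̄`, the point
`v` lies outside `closure M`. Taking `c = 1 / (m + 1)` gives the sequence of (b).
-/

open Metric Filter Topology Set NNReal

lemma exists_le_add_of_bddBelow {α : Type*} {f : α → ℝ} {s : Set α} (hs : s.Nonempty)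
    (hf : BddBelow (f '' s)) {ε : ℝ} (hε : 0 < ε) : ∃ y ∈ s, ∀ z ∈ s, f y ≤ f z + ε := by
  obtain ⟨_, ⟨y, hy, rfl⟩, hlt⟩ := Real.lt_sInf_add_pos (hs.image f) hε
  exact ⟨y, hy, fun z hz => by linarith [csInf_le hf (mem_image_of_mem f hz)]⟩

section Ekeland

variable {X : Type*} [MetricSpace X] {φ : X → ℝ} {κ : ℝ}

def ekelandSet (φ : X → ℝ) (κ : ℝ) (x : X) : Set X :=
  {y | φ y + κ * dist y x ≤ φ x}

lemma self_mem_ekelandSet (x : X) : x ∈ ekelandSet φ κ x := by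
  simp [ekelandSet]

lemma ekelandSet_subset_of_mem (hκ : 0 ≤ κ) {x y : X} (hy : y ∈ ekelandSet φ κ x) :
    ekelandSet φ κ y ⊆ ekelandSet φ κ x := fun z hz => by
  simp only [ekelandSet, mem_ofPred_eq] at hy hz ⊢
  linarith [mul_le_mul_of_nonneg_left (dist_triangle z y x) hκ]

lemma LowerSemicontinuous.isClosed_ekelandSet (hφ : LowerSemicontinuous φ) (x : X) :
    IsClosed (ekelandSet φ κ x) :=
  (hφ.add (continuous_const.mul (continuous_id.dist continuous_const)).lowerSemicontinuous)
    |>.isClosed_preimage (φ x)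

lemma ekelandSet_subset_closedBall (hκ : 0 < κ) {x : X} {ε : ℝ}
    (h : ∀ y ∈ ekelandSet φ κ x, φ x ≤ φ y + ε) : ekelandSet φ κ x ⊆ closedBall x (ε / κ) :=
  fun y hy => by
    rw [mem_closedBall, le_div_iff₀' hκ]
    linarith [h y hy, show φ y + κ * dist y x ≤ φ x from hy]

/-- `x (n + 1)` minimises `φ` over `ekelandSet φ κ (x n)` up to `1 / (n + 1)`, which confines the
next Ekeland set to a small ball. -/
lemma exists_seq_ekelandSet (hbdd : BddBelow (range φ)) (hκ : 0 < κ) (u : X) :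
    ∃ x : ℕ → X, x 0 = u ∧ (∀ n, x (n + 1) ∈ ekelandSet φ κ (x n)) ∧
      ∀ n, ekelandSet φ κ (x (n + 1)) ⊆ closedBall (x (n + 1)) (1 / (n + 1) / κ) := by
  choose g hg_mem hg_le using fun (n : ℕ) (x : X) =>
    exists_le_add_of_bddBelow ⟨x, self_mem_ekelandSet x⟩ (hbdd.mono (image_subset_range _ _))
      (Nat.one_div_pos_of_nat (n := n))
  refine ⟨fun n => Nat.rec u g n, rfl, fun n => hg_mem n _, fun n => ?_⟩
  exact ekelandSet_subset_closedBall hκ fun y hy =>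
    hg_le n _ y (ekelandSet_subset_of_mem hκ.le (hg_mem n _) hy)

theorem LowerSemicontinuous.exists_mem_ekelandSet_forall_le [CompleteSpace X]
    (hφ : LowerSemicontinuous φ) (hbdd : BddBelow (range φ)) (hκ : 0 < κ) (u : X) :
    ∃ v ∈ ekelandSet φ κ u, ∀ x, φ v ≤ φ x + κ * dist x v := by
  obtain ⟨x, hx0, hx_mem, hx_ball⟩ := exists_seq_ekelandSet hbdd hκ u
  set s : ℕ → Set X := fun n => ekelandSet φ κ (x (n + 1))
  have hs_anti : Antitone s := antitone_nat_of_succ_le fun n =>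
    ekelandSet_subset_of_mem hκ.le (hx_mem (n + 1))
  have hs_diam : ∀ n, diam (s n) ≤ 2 * (1 / (n + 1) / κ) := fun n =>
    (diam_mono (hx_ball n) isBounded_closedBall).trans (diam_closedBall (by positivity))
  have hs_small : Tendsto (fun n : ℕ => 2 * (1 / (n + 1) / κ)) atTop (𝓝 0) := by
    simpa using (tendsto_one_div_add_atTop_nhds_zero_nat.div_const κ).const_mul 2
  obtain ⟨v, hv⟩ := nonempty_iInter_of_nonempty_biInter
    (fun n => hφ.isClosed_ekelandSet _) (fun n => isBounded_closedBall.subset (hx_ball n))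
    (fun N => ⟨x (N + 1), mem_iInter₂.2 fun n hn => hs_anti hn (self_mem_ekelandSet _)⟩)
    (squeeze_zero (fun n => diam_nonneg) hs_diam hs_small)
  rw [mem_iInter] at hv
  refine ⟨v, hx0 ▸ ekelandSet_subset_of_mem hκ.le (hx_mem 0) (hv 0), fun y => ?_⟩
  by_contra! hy
  have hy_mem : ∀ n, y ∈ s n := fun n => ekelandSet_subset_of_mem hκ.le (hv n) hy.le
  have hyv : dist y v ≤ 0 := ge_of_tendsto' hs_small fun n =>
    (dist_le_diam_of_mem (isBounded_closedBall.subset (hx_ball n)) (hy_mem n) (hv n)).trans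
      (hs_diam n)
  rw [dist_le_zero.1 hyv, dist_self, mul_zero, add_zero] at hy
  exact hy.false

end Ekeland

lemma exists_notMem_closure_forall_le_add_mul_dist {X : Type*} [MetricSpace X] [CompleteSpace X]
    {f φ : X → ℝ} {M : Set X} {xb : X} {L : ℝ≥0} {r c : ℝ} (hL : 0 < L) (hr : 0 < r)
    (hf : LipschitzOnWith L f (ball xb r)) (hmin : ∀ x ∈ ball xb r ∩ closure M, f xb ≤ f x)
    (hφ0 : ∀ x, 0 ≤ φ x) (hφ : LowerSemicontinuous φ) (hφxb : φ xb = 0)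
    (hfail : ∀ lam > (0:ℝ), ∀ ρ > (0:ℝ), ∃ x ∈ ball xb ρ, lam * f x + φ x < lam * f xb + φ xb)
    (hc : 0 < c) :
    ∃ v ∉ closure M, dist v xb < 2 * c ∧ ∀ x, φ v ≤ φ x + c * dist x v := by
  set lam := c / L
  have hlam : 0 < lam := div_pos hc (mod_cast hL)
  have hlamL : lam * L = c := div_mul_cancel₀ c (mod_cast hL.ne')
  set ρ := min (r / 2) c
  have hρ : 0 < ρ := lt_min (half_pos hr) hc
  have hρr : ball xb (2 * ρ) ⊆ ball xb r :=
    ball_subset_ball (by linarith [min_le_left (r / 2) c])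
  obtain ⟨u, hu, hu_lt⟩ := hfail lam hlam ρ hρ
  rw [hφxb, add_zero] at hu_lt
  have hu_r : u ∈ ball xb r := hρr (ball_subset_ball (by linarith) hu)
  have hxb_r : xb ∈ ball xb r := mem_ball_self hr
  have hφu : φ u < c * ρ := calc
    φ u < lam * (f xb - f u) := by linarith
    _ ≤ lam * (L * dist xb u) := by
      gcongr; linarith [hf.le_add_mul hxb_r hu_r]
    _ < c * ρ := by
      rw [← mul_assoc, hlamL, dist_comm]; exact mul_lt_mul_of_pos_left hu hc
  obtain ⟨v, hv_mem, hv_min⟩ :=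
    hφ.exists_mem_ekelandSet_forall_le ⟨0, forall_mem_range.2 hφ0⟩ hc u
  have hvu : φ v + c * dist v u ≤ φ u := hv_mem
  have hdist_vu : dist v u < ρ := by nlinarith [hφ0 v]
  have hv_r : v ∈ ball xb (2 * ρ) :=
    mem_ball.2 <| by linarith [dist_triangle v u xb, mem_ball.1 hu]
  refine ⟨v, fun hvM => ?_, by linarith [mem_ball.1 hv_r, min_le_right (r / 2) c], hv_min⟩
  have hlip_vu : lam * (f v - f u) ≤ c * dist v u := by
    rw [← hlamL, mul_assoc]; gcongr; linarith [hf.le_add_mul (hρr hv_r) hu_r]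
  have hfv : lam * f v < lam * f xb := by linarith [hφ0 v]
  exact (hmin v ⟨hρr hv_r, hvM⟩).not_gt (lt_of_mul_lt_mul_left hfv hlam.le)

theorem optimality_alternative_general {X : Type*} [MetricSpace X] [CompleteSpace X]
    (f : X → ℝ) (hf : LocallyLipschitz f)
    (M : Set X) (xb : X)
    (hmin : ∃ r > 0, ∀ x ∈ M ∩ ball xb r, f xb ≤ f x)
    (φ : X → ℝ) (hφ0 : ∀ x, 0 ≤ φ x) (hφlsc : LowerSemicontinuous φ)
    (hφxb : φ xb = 0) :
    (∃ lam > (0:ℝ), ∃ r > (0:ℝ), ∀ x ∈ ball xb r, lam * f xb + φ xb ≤ lam * f x + φ x) ∨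
    (∃ xs : ℕ → X, (∀ m, xs m ∉ closure M) ∧ Tendsto xs atTop (𝓝 xb) ∧
      ∀ m : ℕ, ∀ x : X, φ (xs m) ≤ φ x + (1 / (m + 1 : ℝ)) * dist x (xs m)) := by
  refine or_iff_not_imp_left.2 fun hfail => ?_
  push Not at hfail
  obtain ⟨r₁, hr₁, hmin₁⟩ := hmin
  have hloc : IsLocalMinOn f (closure M) xb :=
    IsLocalMinOn.closure (mem_nhdsWithin_iff.2 ⟨r₁, hr₁, fun x hx => hmin₁ x ⟨hx.2, hx.1⟩⟩)
      hf.continuous.continuousOn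
  obtain ⟨r₂, hr₂, hmin₂⟩ := mem_nhdsWithin_iff.1 hloc
  obtain ⟨K, t, ht, hK⟩ := hf xb
  obtain ⟨r₃, hr₃, hr₃t⟩ := Metric.mem_nhds_iff.1 ht
  have hf' : LipschitzOnWith (K + 1) f (ball xb (min r₂ r₃)) :=
    (hK.mono ((ball_subset_ball (min_le_right _ _)).trans hr₃t)).weaken le_self_add
  have hmin' : ∀ x ∈ ball xb (min r₂ r₃) ∩ closure M, f xb ≤ f x := fun x hx =>
    hmin₂ ⟨ball_subset_ball (min_le_left _ _) hx.1, hx.2⟩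
  choose xs hxs_notMem hxs_dist hxs_min using fun m : ℕ =>
    exists_notMem_closure_forall_le_add_mul_dist (by positivity) (lt_min hr₂ hr₃) hf' hmin'
      hφ0 hφlsc hφxb hfail (Nat.one_div_pos_of_nat (n := m))
  refine ⟨xs, hxs_notMem, tendsto_iff_dist_tendsto_zero.2 ?_, hxs_min⟩
  refine squeeze_zero (fun _ => dist_nonneg) (fun m => (hxs_dist m).le) ?_
  simpa using tendsto_one_div_add_atTop_nhds_zero_nat.const_mul (2:ℝ)

/-- The optimality alternative. -/
theorem optimality_alternative {X : Type*} [MetricSpace X] [CompleteSpace X]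
    (f : X → ℝ) (hf : LocallyLipschitz f)
    (M : Set X) (xb : X) (hxbM : xb ∈ M)
    (hmin : ∃ r > 0, ∀ x ∈ M ∩ ball xb r, f xb ≤ f x)
    (φ : X → ℝ) (hφ0 : ∀ x, 0 ≤ φ x) (hφlsc : LowerSemicontinuous φ)
    (hφxb : φ xb = 0) :
    (∃ lam > (0:ℝ), ∃ r > (0:ℝ), ∀ x ∈ ball xb r, lam * f xb + φ xb ≤ lam * f x + φ x) ∨
    (∃ xs : ℕ → X, (∀ m, xs m ∉ closure M) ∧ Tendsto xs atTop (𝓝 xb) ∧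
      ∀ m : ℕ, ∀ x : X, φ (xs m) ≤ φ x + (1 / (m + 1 : ℝ)) * dist x (xs m)) :=
  optimality_alternative_general f hf M xb hmin φ hφ0 hφlsc hφxb
end

section
/- Let U : [0,T] ⇉ ℝ^m be a set-valued mapping with measurable graph and f : [0,T] × ℝ^m → ℝ ∪ {-∞,+∞} jointly measurable. Suppose ū : [0,T] → ℝ^m is a measurable selection of U such that t ↦ f(t, ū(t)) is integrable and ∫₀^T f(t, ū(t)) dt ≥ ∫₀^T f(t, u(t)) dt for every measurable selection u of U for which the right-hand integral makes sense. Then for almost every t ∈ [0,T], f(t, ū(t)) ≥ f(t, u) for all u ∈ U(t). -/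
/-!
If the conclusion failed on a set of positive measure, then for some `n` the Borel set `E n` of
pairs `(t, u)` with `u ∈ U t` and `f t (ub t) < f t u ≤ f t (ub t) + n` would project onto a set
of positive outer measure. That projection is only analytic, so we select by Aumann's argument:
write `E n` as a continuous image of Baire space `ℕ → ℕ`; capacitability gives a compact
`L ⊆ ℕ → ℕ` whose image still projects onto a set of positive measure, now closed, and over it
the lexicographically least point of `L` in each fibre is a Borel selection. Replacing `ub` by
this selection there keeps `f` integrable and raises its integral strictly, contradicting the
maximality of `ub`.
-/

open Set MeasureTheory Filter Function PiNat

section LeftmostBranch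

/-- Prefixes are listed most recent digit first, following `PiNat.res`. -/
noncomputable def leftmostPrefix (T : Set (List ℕ)) : ℕ → List ℕ
  | 0 => []
  | n + 1 => sInf {j | j :: leftmostPrefix T n ∈ T} :: leftmostPrefix T n

noncomputable def leftmostBranch (T : Set (List ℕ)) (n : ℕ) : ℕ :=
  sInf {j | j :: leftmostPrefix T n ∈ T}

theorem res_leftmostBranch (T : Set (List ℕ)) (n : ℕ) :
    res (leftmostBranch T) n = leftmostPrefix T n := by
  induction n with
  | zero => rfl
  | succ n ih => rw [res_succ, ih]; rfl

theorem leftmostPrefix_mem {T : Set (List ℕ)} (hnil : [] ∈ T)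
    (hT : ∀ s ∈ T, ∃ j, j :: s ∈ T) (n : ℕ) : leftmostPrefix T n ∈ T := by
  induction n with
  | zero => exact hnil
  | succ n ih => exact Nat.sInf_mem (hT _ ih)

variable {α : Type*} [MeasurableSpace α]

theorem measurable_sInf_setOf_mem {B : ℕ → Set α} (hB : ∀ j, MeasurableSet (B j)) :
    Measurable fun t => sInf {j | t ∈ B j} := by
  classical
  refine measurable_to_countable' fun k => ?_
  have : (fun t => sInf {j | t ∈ B j}) ⁻¹' {k} =
      (B k ∩ ⋂ i ∈ Finset.range k, (B i)ᶜ) ∪ {_t | k = 0} ∩ ⋂ j, (B j)ᶜ := by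
    ext t
    simp only [mem_preimage, mem_singleton_iff, mem_union, mem_inter_iff, mem_iInter,
      mem_compl_iff, Finset.mem_range]
    by_cases hne : ∃ j, t ∈ B j
    · rw [Nat.sInf_def (s := {j | t ∈ B j}) hne, Nat.find_eq_iff]
      obtain ⟨j, hj⟩ := hne
      exact ⟨Or.inl, fun h => h.resolve_right fun h' => h'.2 j hj⟩
    · push Not at hne
      simp [hne, eq_comm]
  rw [this]
  exact ((hB k).inter (.biInter (to_countable _) fun i _ => (hB i).compl)).union
    (MeasurableSet.const _ |>.inter (.iInter fun j => (hB j).compl))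

variable {T : α → Set (List ℕ)} (hT : ∀ s, MeasurableSet {t | s ∈ T t})
include hT

theorem measurableSet_leftmostPrefix_eq (n : ℕ) (s : List ℕ) :
    MeasurableSet {t | leftmostPrefix (T t) n = s} := by
  induction n generalizing s with
  | zero => exact .const ([] = s)
  | succ n ih =>
    rcases s with _ | ⟨j, s⟩
    · simp [leftmostPrefix]
    · have : {t | leftmostPrefix (T t) (n + 1) = j :: s} =
          (fun t => sInf {i | i :: s ∈ T t}) ⁻¹' {j} ∩ {t | leftmostPrefix (T t) n = s} := by
        ext t
        simp only [leftmostPrefix, List.cons.injEq, mem_inter_iff, mem_preimage,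
          mem_singleton_iff, mem_ofPred_eq]
        constructor <;> rintro ⟨h, rfl⟩ <;> exact ⟨h, rfl⟩
      rw [this]
      exact ((measurable_sInf_setOf_mem fun i => hT (i :: s)) (measurableSet_singleton j)).inter
        (ih s)

theorem measurable_leftmostBranch : Measurable fun t => leftmostBranch (T t) := by
  let : MeasurableSpace (List ℕ) := ⊤
  have hprefix n : Measurable fun t => leftmostPrefix (T t) n :=
    measurable_to_countable' fun s => measurableSet_leftmostPrefix_eq hT n s
  exact measurable_pi_lambda _ fun n =>
    (measurable_from_top (f := fun s : List ℕ => s.headI)).comp (hprefix (n + 1))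

end LeftmostBranch

section BaireSpace

theorem isClosed_setOf_res_eq (n : ℕ) (s : List ℕ) : IsClosed {y : ℕ → ℕ | res y n = s} := by
  induction n generalizing s with
  | zero => exact isClosed_const (p := [] = s)
  | succ n ih =>
    rcases s with _ | ⟨j, s⟩
    · simp [res_succ]
    · simp only [res_succ, List.cons.injEq, ofPred_and]
      exact (isClosed_eq (continuous_apply n) continuous_const).inter (ih s)

theorem IsClosed.mem_of_forall_exists_res_eq {K : Set (ℕ → ℕ)} (hK : IsClosed K) {b : ℕ → ℕ}
    (h : ∀ n, ∃ y ∈ K, res y n = res b n) : b ∈ K := by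
  choose y hyK hy using h
  refine hK.mem_of_tendsto (tendsto_pi_nhds.2 fun i => ?_) (.of_forall (f := atTop) hyK)
  exact tendsto_const_nhds.congr'
    ((eventually_gt_atTop i).mono fun n hn => (res_eq_res.1 (hy n) hn).symm)

theorem exists_measurable_mapsTo_rightInvOn_image {α : Type*} [TopologicalSpace α] [T2Space α]
    [MeasurableSpace α] [OpensMeasurableSpace α] {h : (ℕ → ℕ) → α} (hh : Continuous h)
    {L : Set (ℕ → ℕ)} (hL : IsCompact L) :
    ∃ σ : α → ℕ → ℕ, Measurable σ ∧ MapsTo σ (h '' L) L ∧ RightInvOn σ h (h '' L) := by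
  let T (t : α) : Set (List ℕ) := {s | t ∈ h '' (L ∩ {y | res y s.length = s})}
  have hT s : MeasurableSet {t | s ∈ T t} :=
    ((hL.inter_right (isClosed_setOf_res_eq _ s)).image hh).isClosed.measurableSet
  have hσ t (ht : t ∈ h '' L) : leftmostBranch (T t) ∈ L ∩ h ⁻¹' {t} := by
    have hprefix n : leftmostPrefix (T t) n ∈ T t := by
      refine leftmostPrefix_mem (by simpa [T] using ht) (fun s hs => ?_) n
      obtain ⟨y, ⟨hyL, hys⟩, hyt⟩ := hs
      exact ⟨y s.length, y, ⟨hyL, by simpa [res_succ] using hys⟩, hyt⟩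
    refine (hL.isClosed.inter (isClosed_singleton.preimage hh)).mem_of_forall_exists_res_eq
      fun n => ?_
    obtain ⟨y, ⟨hyL, hy⟩, hyt⟩ := hprefix n
    rw [← res_leftmostBranch] at hy
    exact ⟨y, ⟨hyL, hyt⟩, by rwa [res_length] at hy⟩
  exact ⟨fun t => leftmostBranch (T t), measurable_leftmostBranch hT,
    fun t ht => (hσ t ht).1, fun t ht => (hσ t ht).2⟩

theorem exists_forall_of_exists_update {P : ℕ → (ℕ → ℕ) → Prop}
    (hP : ∀ n x y, (∀ i < n, x i = y i) → P n x → P n y) (h0 : P 0 0)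
    (hstep : ∀ n x, P n x → ∃ k, P (n + 1) (update x n k)) : ∃ N, ∀ n, P n N := by
  choose! S hS using hstep
  let x : ℕ → ℕ → ℕ := fun n => Nat.rec 0 (fun n y => update y n (S n y)) n
  have hx n : P n (x n) := by
    induction n with
    | zero => exact h0
    | succ n ih => exact hS n (x n) ih
  have hagree n : ∀ i < n, x n i = x (i + 1) i := by
    induction n with
    | zero => exact fun i hi => absurd hi (Nat.not_lt_zero i)
    | succ n ih =>
      intro i hi
      rcases Nat.lt_succ_iff_lt_or_eq.1 hi with hi | rfl
      · rw [← ih i hi]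
        exact update_of_ne hi.ne _ _
      · rfl
  exact ⟨fun i => x (i + 1) i, fun n => hP n _ _ (hagree n) (hx n)⟩

theorem isCompact_Iic_of_orderBot {α : Type*} [TopologicalSpace α] [Preorder α] [OrderBot α]
    [CompactIccSpace α] (a : α) : IsCompact (Iic a) := by
  simpa using isCompact_Icc (a := ⊥) (b := a)

theorem exists_setOf_forall_lt_le_subset {N : ℕ → ℕ} {W : Set (ℕ → ℕ)} (hW : IsOpen W)
    (hN : Iic N ⊆ W) : ∃ n, {x | ∀ i < n, x i ≤ N i} ⊆ W := by
  by_contra! hcon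
  choose x hxN hxW using fun n => not_subset.1 (hcon n)
  obtain ⟨a, ha, φ, hφ, hlim⟩ := (isCompact_Iic_of_orderBot N).tendsto_subseq
    (x := fun n => x n ⊓ N) fun _ => inf_le_right (a := x _)
  have : Tendsto (x ∘ φ) atTop (nhds a) := by
    refine tendsto_pi_nhds.2 fun i => (tendsto_pi_nhds.1 hlim i).congr' ?_
    filter_upwards [eventually_gt_atTop i] with k hk
    exact min_eq_left (hxN (φ k) i (hk.trans_le (hφ.id_le k)))
  exact hW.isClosed_compl.mem_of_tendsto this (.of_forall fun k => hxW (φ k)) (hN ha)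

theorem exists_isCompact_measure_image_ne_zero {α : Type*} [TopologicalSpace α]
    [MeasurableSpace α] {μ : Measure α} [μ.OuterRegular] {h : (ℕ → ℕ) → α} (hh : Continuous h)
    (hμ : μ (range h) ≠ 0) : ∃ L, IsCompact L ∧ μ (h '' L) ≠ 0 := by
  obtain ⟨d, hd0, hd⟩ := exists_between (pos_iff_ne_zero.2 hμ)
  let B (N : ℕ → ℕ) (n : ℕ) : Set (ℕ → ℕ) := {x | ∀ i < n, x i ≤ N i}
  -- Choose the bounds `N i` one at a time, keeping the measure of the image above `d`.
  obtain ⟨N, hN⟩ : ∃ N, ∀ n, d < μ (h '' B N n) := by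
    refine exists_forall_of_exists_update (fun n x y hxy => ?_) (by simpa [B] using hd)
      fun n x hx => ?_
    · have : B x n = B y n := by
        ext z
        exact forall₂_congr fun i hi => by rw [hxy i hi]
      exact this ▸ id
    · have hcover : B x n = ⋃ k, B (update x n k) (n + 1) := by
        ext z
        simp only [B, mem_iUnion, mem_ofPred_eq]
        refine ⟨fun hz => ⟨z n, fun i hi => ?_⟩, fun ⟨k, hz⟩ i hi => ?_⟩
        · rcases Nat.lt_succ_iff_lt_or_eq.1 hi with hi | rfl
          · simpa [hi.ne] using hz i hi
          · simp
        · simpa [hi.ne] using hz i (hi.trans n.lt_succ_self)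
      have hmono : Monotone fun k => h '' B (update x n k) (n + 1) :=
        fun k k' hk => image_mono fun z hz i hi => (hz i hi).trans (update_mono hk i)
      rw [hcover, image_iUnion, hmono.measure_iUnion] at hx
      exact lt_iSup_iff.1 hx
  refine ⟨Iic N, isCompact_Iic_of_orderBot N, (hd0.trans_le ?_).ne'⟩
  by_contra! hlt
  obtain ⟨O, hLO, hO, hOd⟩ := (h '' Iic N).exists_isOpen_lt_of_lt d hlt
  obtain ⟨n, hn⟩ := exists_setOf_forall_lt_le_subset (hO.preimage hh) (image_subset_iff.1 hLO)
  exact (hN n).not_ge ((measure_mono (image_subset_iff.2 hn)).trans hOd.le)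

end BaireSpace

theorem MeasureTheory.AnalyticSet.exists_measurable_selection {α β : Type*}
    [TopologicalSpace α] [T2Space α] [MeasurableSpace α] [OpensMeasurableSpace α]
    [TopologicalSpace β] [MeasurableSpace β] [BorelSpace β] {E : Set (α × β)}
    (hE : AnalyticSet E) {μ : Measure α} [μ.OuterRegular] (hμ : μ (Prod.fst '' E) ≠ 0) :
    ∃ (S : Set α) (v : α → β), MeasurableSet S ∧ μ S ≠ 0 ∧ Measurable v ∧
      ∀ t ∈ S, (t, v t) ∈ E := by
  rw [AnalyticSet] at hE
  obtain rfl | ⟨g, hg, rfl⟩ := hE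
  · simp at hμ
  have hh : Continuous (Prod.fst ∘ g) := continuous_fst.comp hg
  obtain ⟨L, hL, hLμ⟩ := exists_isCompact_measure_image_ne_zero hh (by rwa [range_comp])
  obtain ⟨σ, hσ, -, hσh⟩ := exists_measurable_mapsTo_rightInvOn_image hh hL
  refine ⟨_, Prod.snd ∘ g ∘ σ, (hL.image hh).isClosed.measurableSet, hLμ,
    (continuous_snd.comp hg).measurable.comp hσ, fun t ht => ?_⟩
  have hgσ : g (σ t) = (t, (g (σ t)).2) := Prod.ext (hσh ht) rfl
  exact hgσ ▸ mem_range_self _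

theorem MeasureTheory.integral_lt_integral_of_ae_le_of_measure_setOf_lt_ne_zero {α : Type*}
    [MeasurableSpace α] {μ : Measure α} {F G : α → ℝ} (hG : Integrable G μ)
    (hF : Integrable F μ) (hGF : G ≤ᵐ[μ] F) (hlt : μ {t | G t < F t} ≠ 0) :
    ∫ t, G t ∂μ < ∫ t, F t ∂μ := by
  rw [← sub_pos, ← integral_sub hF hG, integral_pos_iff_support_of_nonneg_ae
    (hGF.mono fun t ht => sub_nonneg.2 ht) (hF.sub hG)]
  exact pos_iff_ne_zero.2 fun h0 =>
    hlt (measure_mono_null (fun t ht => sub_ne_zero.2 (ne_of_gt ht)) h0)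

theorem MeasureTheory.Integrable.of_le_of_le_add {α : Type*} [MeasurableSpace α]
    {μ : Measure α} [IsFiniteMeasure μ] {F G : α → ℝ} (hG : Integrable G μ)
    (hF : AEStronglyMeasurable F μ) {C : ℝ} (hGF : ∀ t, G t ≤ F t) (hFG : ∀ t, F t ≤ G t + C) :
    Integrable F μ := by
  refine (hG.add (Integrable.of_bound (hF.sub hG.aestronglyMeasurable) C
    (.of_forall fun t => ?_))).congr (.of_forall fun t => add_sub_cancel (G t) (F t))
  rw [Pi.sub_apply, Real.norm_eq_abs, abs_of_nonneg (sub_nonneg.2 (hGF t))]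
  linarith [hFG t]

theorem exists_measurable_improvement {α β : Type*} [TopologicalSpace α] [PolishSpace α]
    [MeasurableSpace α] [BorelSpace α] [TopologicalSpace β] [PolishSpace β] [MeasurableSpace β]
    [BorelSpace β] {μ : Measure α} [μ.OuterRegular] {U : α → Set β}
    (hU : MeasurableSet {p : α × β | p.2 ∈ U p.1}) {f : α → β → ℝ}
    (hf : Measurable fun p : α × β => f p.1 p.2) {ub : α → β} (hub : Measurable ub)
    (hbad : μ {t | ∃ u ∈ U t, f t (ub t) < f t u} ≠ 0) :
    ∃ u : α → β, Measurable u ∧ (∀ t, ub t ∈ U t → u t ∈ U t) ∧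
      μ {t | f t (ub t) < f t (u t)} ≠ 0 ∧
      ∃ C, ∀ t, f t (ub t) ≤ f t (u t) ∧ f t (u t) ≤ f t (ub t) + C := by
  classical
  have hfub : Measurable fun p : α × β => f p.1 (ub p.1) :=
    hf.comp (measurable_fst.prodMk (hub.comp measurable_fst))
  let E (n : ℕ) : Set (α × β) :=
    {p | p.2 ∈ U p.1 ∧ f p.1 (ub p.1) < f p.1 p.2 ∧ f p.1 p.2 ≤ f p.1 (ub p.1) + n}
  obtain ⟨n, hn⟩ : ∃ n, μ (Prod.fst '' E n) ≠ 0 := by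
    by_contra! h
    refine hbad (measure_mono_null (fun t ⟨u, hu, hlt⟩ => ?_) (measure_iUnion_null h))
    obtain ⟨n, hn⟩ := exists_nat_ge (f t u - f t (ub t))
    exact mem_iUnion.2 ⟨n, (t, u), ⟨hu, hlt, by linarith⟩, rfl⟩
  have hE : MeasurableSet (E n) :=
    hU.inter ((measurableSet_lt hfub hf).inter (measurableSet_le hf (hfub.add_const _)))
  obtain ⟨S, v, hS, hSμ, hv, hSv⟩ := hE.analyticSet.exists_measurable_selection hn
  refine ⟨S.piecewise v ub, Measurable.piecewise hS hv hub, fun t ht => ?_,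
    fun h0 => hSμ (measure_mono_null (fun t htS => ?_) h0), n, fun t => ?_⟩
  · by_cases htS : t ∈ S
    · simpa [htS] using (hSv t htS).1
    · simpa [htS] using ht
  · simpa [htS] using (hSv t htS).2.1
  · by_cases htS : t ∈ S
    · simpa [htS] using ⟨(hSv t htS).2.1.le, (hSv t htS).2.2⟩
    · simp [htS]

theorem integral_to_pointwise_max_general (m : ℕ) (T : ℝ)
    (U : ℝ → Set (Fin m → ℝ))
    (hU : MeasurableSet {p : ℝ × (Fin m → ℝ) | p.2 ∈ U p.1})
    (f : ℝ → (Fin m → ℝ) → ℝ)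
    (hf : Measurable fun p : ℝ × (Fin m → ℝ) => f p.1 p.2)
    (ub : ℝ → (Fin m → ℝ)) (hubm : Measurable ub)
    (hubsel : ∀ᵐ t ∂(volume.restrict (Icc 0 T)), ub t ∈ U t)
    (hubint : IntegrableOn (fun t => f t (ub t)) (Icc 0 T))
    (hmax : ∀ u : ℝ → (Fin m → ℝ), Measurable u →
      (∀ᵐ t ∂(volume.restrict (Icc 0 T)), u t ∈ U t) →
      IntegrableOn (fun t => f t (u t)) (Icc 0 T) →
      ∫ t in Icc 0 T, f t (u t) ≤ ∫ t in Icc 0 T, f t (ub t)) :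
    ∀ᵐ t ∂(volume.restrict (Icc 0 T)), ∀ u ∈ U t, f t u ≤ f t (ub t) := by
  rw [ae_iff]
  by_contra hbad
  push Not at hbad
  obtain ⟨u, hum, husel, hlt, C, hu⟩ := exists_measurable_improvement hU hf hubm hbad
  have huint : IntegrableOn (fun t => f t (u t)) (Icc 0 T) :=
    Integrable.of_le_of_le_add hubint (hf.comp (measurable_id.prodMk hum)).aestronglyMeasurable
      (fun t => (hu t).1) (fun t => (hu t).2)
  exact (hmax u hum (hubsel.mono husel) huint).not_gt
    (integral_lt_integral_of_ae_le_of_measure_setOf_lt_ne_zero hubint huint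
      (.of_forall fun t => (hu t).1) hlt)

/-- An integral maximum condition over measurable selections upgrades to a
pointwise maximum condition (via the Aumann selection theorem). -/
theorem integral_to_pointwise_max (m : ℕ) (T : ℝ) (hT : 0 < T)
    (U : ℝ → Set (Fin m → ℝ))
    (hU : MeasurableSet {p : ℝ × (Fin m → ℝ) | p.2 ∈ U p.1})
    (f : ℝ → (Fin m → ℝ) → ℝ)
    (hf : Measurable fun p : ℝ × (Fin m → ℝ) => f p.1 p.2)
    (ub : ℝ → (Fin m → ℝ)) (hubm : Measurable ub)
    (hubsel : ∀ᵐ t ∂(volume.restrict (Icc 0 T)), ub t ∈ U t)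
    (hubint : IntegrableOn (fun t => f t (ub t)) (Icc 0 T))
    (hmax : ∀ u : ℝ → (Fin m → ℝ), Measurable u →
      (∀ᵐ t ∂(volume.restrict (Icc 0 T)), u t ∈ U t) →
      IntegrableOn (fun t => f t (u t)) (Icc 0 T) →
      ∫ t in Icc 0 T, f t (u t) ≤ ∫ t in Icc 0 T, f t (ub t)) :
    ∀ᵐ t ∂(volume.restrict (Icc 0 T)), ∀ u ∈ U t, f t u ≤ f t (ub t) :=
  integral_to_pointwise_max_general m T U hU f hf ub hubm hubsel hubint hmax
end

section
/- Let g : Y → ℝ be sublinear and continuous on a Banach space Y with ∂g(0) weak*-compact, let A : Z → Y be a continuous linear map, y₀ ∈ Y, and ε > 0. Then inf_{h ∈ Z} [ g(y₀ + Ah) + ε‖h‖ ] = sup { ⟨y*, y₀⟩ : y* ∈ ∂g(0), ‖A* y*‖ ≤ ε }, where A* is the adjoint of A. -/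
/-!
The perturbed value `p y = inf_h g (y + A h) + q h` (here `q h = ε ‖h‖`) is sublinear as soon as
it is finite at `y₀`, lies below `g`, and satisfies `p (-A h) ≤ q h`. A Hahn–Banach functional
`f ≤ p` with `f y₀ = p y₀` is therefore dominated by `g`, hence continuous, and has
`‖f ∘ A‖ ≤ ε`: it attains the dual supremum, while every dual feasible `y*` satisfies
`y* y₀ ≤ g (y₀ + A h) + ε ‖h‖`. If the infimum is `-∞` the dual set is empty and both sides
are the junk value `0`.
-/

open Set Filter Topology

structure IsSublinear {E : Type*} [AddCommGroup E] [Module ℝ E] (N : E → ℝ) : Prop where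
  smul_of_pos : ∀ c : ℝ, 0 < c → ∀ x, N (c • x) = c * N x
  add_le : ∀ x y, N (x + y) ≤ N x + N y

namespace IsSublinear

variable {E : Type*} [AddCommGroup E] [Module ℝ E] {N : E → ℝ}

theorem map_zero (hN : IsSublinear N) : N 0 = 0 := by
  have h := hN.smul_of_pos 2 two_pos 0
  rw [smul_zero] at h
  linarith

theorem add_neg_nonneg (hN : IsSublinear N) (x : E) : 0 ≤ N x + N (-x) := by
  simpa [hN.map_zero] using hN.add_le x (-x)

theorem mul_le_apply_smul (hN : IsSublinear N) (t : ℝ) (x : E) : t * N x ≤ N (t • x) := by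
  rcases lt_trichotomy t 0 with ht | rfl | ht
  · have h := hN.smul_of_pos (-t) (neg_pos.2 ht) (-x)
    rw [neg_smul_neg] at h
    nlinarith [hN.add_neg_nonneg x]
  · simp [hN.map_zero]
  · exact (hN.smul_of_pos t ht x).ge

theorem exists_linearMap_le_eq (hN : IsSublinear N) (x₀ : E) :
    ∃ f : E →ₗ[ℝ] ℝ, (∀ x, f x ≤ N x) ∧ f x₀ = N x₀ := by
  have hker : ∀ c : ℝ, c • x₀ = 0 → c • N x₀ = 0 := by
    intro c h
    rcases smul_eq_zero.1 h with rfl | rfl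
    · exact zero_smul ℝ _
    · rw [hN.map_zero, smul_zero]
  set f₀ : E →ₗ.[ℝ] ℝ := LinearPMap.mkSpanSingleton' (σ := RingHom.id ℝ) x₀ (N x₀) hker
  obtain ⟨f, hf₀, hfN⟩ := exists_extension_of_le_sublinear f₀ N hN.smul_of_pos hN.add_le <| by
    rintro ⟨x, hx⟩
    obtain ⟨t, rfl⟩ := Submodule.mem_span_singleton.1 hx
    rw [LinearPMap.mkSpanSingleton'_apply, smul_eq_mul]
    exact hN.mul_le_apply_smul t x₀
  have hx₀ : x₀ ∈ f₀.domain := Submodule.mem_span_singleton_self x₀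
  exact ⟨f, hfN, (hf₀ ⟨x₀, hx₀⟩).trans (LinearPMap.mkSpanSingleton'_apply_self _ _ _ _)⟩

end IsSublinear

section Penalized

variable {E F : Type*} [AddCommGroup E] [Module ℝ E] [AddCommGroup F] [Module ℝ F]
  {g : E → ℝ} {q : F → ℝ} {A : F →ₗ[ℝ] E} {y : E} {k : F}

noncomputable def penalizedInf (g : E → ℝ) (q : F → ℝ) (A : F →ₗ[ℝ] E) (y : E) : ℝ :=
  ⨅ h, g (y + A h) + q h

theorem bddBelow_penalized_of_bddBelow (hg : ∀ y z, g (y + z) ≤ g y + g z) {y₀ : E}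
    (hB : BddBelow (range fun h => g (y₀ + A h) + q h)) (y : E) :
    BddBelow (range fun h => g (y + A h) + q h) := by
  obtain ⟨m, hm⟩ := hB
  refine ⟨m - g (y₀ - y), ?_⟩
  rintro _ ⟨h, rfl⟩
  have h₁ := hm ⟨h, rfl⟩
  have h₂ := hg (y + A h) (y₀ - y)
  rw [show y + A h + (y₀ - y) = y₀ + A h by abel] at h₂
  dsimp only at h₁ ⊢
  linarith

theorem penalizedInf_le (hB : BddBelow (range fun h => g (y + A h) + q h)) (h : F) :
    penalizedInf g q A y ≤ g (y + A h) + q h :=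
  ciInf_le hB h

theorem penalizedInf_le_self (hq : IsSublinear q)
    (hB : BddBelow (range fun h => g (y + A h) + q h)) : penalizedInf g q A y ≤ g y := by
  simpa [hq.map_zero] using penalizedInf_le hB 0

theorem penalizedInf_neg_apply_le (hg : IsSublinear g)
    (hB : BddBelow (range fun h => g (-A k + A h) + q h)) : penalizedInf g q A (-A k) ≤ q k := by
  simpa [hg.map_zero] using penalizedInf_le hB k

theorem isSublinear_penalizedInf (hg : IsSublinear g) (hq : IsSublinear q) {y₀ : E}
    (hB : BddBelow (range fun h => g (y₀ + A h) + q h)) : IsSublinear (penalizedInf g q A) where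
  smul_of_pos c hc y := by
    have hsurj : Function.Surjective fun h : F => c • h :=
      fun h => ⟨c⁻¹ • h, smul_inv_smul₀ hc.ne' h⟩
    rw [penalizedInf, penalizedInf, Real.mul_iInf_of_nonneg hc.le, ← hsurj.iInf_comp]
    congr 1 with h
    rw [map_smul, ← smul_add, hg.smul_of_pos c hc, hq.smul_of_pos c hc, mul_add]
  add_le y z := by
    refine le_ciInf_add_ciInf fun h k => ?_
    calc penalizedInf g q A (y + z) ≤ g (y + z + A (h + k)) + q (h + k) :=
          penalizedInf_le (bddBelow_penalized_of_bddBelow hg.add_le hB _) _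
      _ ≤ g (y + A h) + q h + (g (z + A k) + q k) := by
          have hgyz := hg.add_le (y + A h) (z + A k)
          rw [show y + A h + (z + A k) = y + z + A (h + k) by rw [map_add]; abel] at hgyz
          linarith [hq.add_le h k]

theorem linearMap_apply_le_penalized {f : E →ₗ[ℝ] ℝ} (hfg : ∀ y, f y ≤ g y)
    (hfq : ∀ h, -f (A h) ≤ q h) (y₀ : E) (h : F) : f y₀ ≤ g (y₀ + A h) + q h := by
  have := hfg (y₀ + A h)
  rw [map_add] at this
  linarith [hfq h]

theorem exists_linearMap_eq_penalizedInf (hg : IsSublinear g) (hq : IsSublinear q) {y₀ : E}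
    (hB : BddBelow (range fun h => g (y₀ + A h) + q h)) :
    ∃ f : E →ₗ[ℝ] ℝ, (∀ y, f y ≤ g y) ∧ (∀ h, -f (A h) ≤ q h) ∧
      f y₀ = penalizedInf g q A y₀ := by
  obtain ⟨f, hfp, hf₀⟩ := (isSublinear_penalizedInf hg hq hB).exists_linearMap_le_eq y₀
  have hBy := bddBelow_penalized_of_bddBelow hg.add_le hB
  refine ⟨f, fun y => (hfp y).trans (penalizedInf_le_self hq (hBy y)), fun h => ?_, hf₀⟩
  rw [← map_neg]
  exact (hfp _).trans (penalizedInf_neg_apply_le hg (hBy _))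

end Penalized

theorem LinearMap.continuous_of_le {E : Type*} [AddCommGroup E] [Module ℝ E] [TopologicalSpace E]
    [IsTopologicalAddGroup E] {N : E → ℝ} (hN : Tendsto N (𝓝 0) (𝓝 0)) (f : E →ₗ[ℝ] ℝ)
    (hf : ∀ x, f x ≤ N x) : Continuous f := by
  refine continuous_of_continuousAt_zero f ?_
  rw [ContinuousAt, map_zero, Metric.tendsto_nhds]
  intro δ hδ
  have hneg : Tendsto (fun x => N (-x)) (𝓝 0) (𝓝 0) :=
    hN.comp (continuous_neg.tendsto' (0 : E) 0 neg_zero)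
  filter_upwards [hN.eventually (gt_mem_nhds hδ), hneg.eventually (gt_mem_nhds hδ)] with x h₁ h₂
  rw [Real.dist_eq, sub_zero, abs_lt]
  constructor <;> linarith [hf x, hf (-x), map_neg f x]

theorem isSublinear_const_mul_norm {Z : Type*} [SeminormedAddCommGroup Z] [NormedSpace ℝ Z]
    {ε : ℝ} (hε : 0 ≤ ε) : IsSublinear fun h : Z => ε * ‖h‖ where
  smul_of_pos c hc h := by rw [norm_smul, Real.norm_of_nonneg hc.le]; ring
  add_le h k := by rw [← mul_add]; exact mul_le_mul_of_nonneg_left (norm_add_le h k) hε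

theorem ContinuousLinearMap.opNorm_le_iff_neg_le {Z : Type*} [SeminormedAddCommGroup Z]
    [NormedSpace ℝ Z] (u : Z →L[ℝ] ℝ) {ε : ℝ} (hε : 0 ≤ ε) :
    ‖u‖ ≤ ε ↔ ∀ h, -u h ≤ ε * ‖h‖ := by
  rw [u.opNorm_le_iff hε]
  refine ⟨fun hu h => (neg_le_abs _).trans (hu h), fun hu h => abs_le.2 ⟨?_, ?_⟩⟩
  · linarith [hu h]
  · simpa using hu (-h)

section Minimax

variable {Y Z : Type*} [AddCommGroup Y] [Module ℝ Y] [TopologicalSpace Y]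
  [SeminormedAddCommGroup Z] [NormedSpace ℝ Z] {g : Y → ℝ} {A : Z →L[ℝ] Y} {ε : ℝ} {y₀ : Y}

theorem dual_subset_lowerBounds_primal (hε : 0 ≤ ε) :
    {r : ℝ | ∃ ys : Y →L[ℝ] ℝ, (∀ y, ys y ≤ g y) ∧ ‖ys.comp A‖ ≤ ε ∧ r = ys y₀} ⊆
      lowerBounds (range fun h => g (y₀ + A h) + ε * ‖h‖) := by
  rintro _ ⟨ys, hysg, hysA, rfl⟩ _ ⟨h, rfl⟩
  exact linearMap_apply_le_penalized (f := ys) (A := A) hysg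
    ((ys.comp A).opNorm_le_iff_neg_le hε |>.1 hysA) y₀ h

theorem isGreatest_dual_penalizedInf [IsTopologicalAddGroup Y] (hg : IsSublinear g)
    (hgc : ContinuousAt g 0) (hε : 0 ≤ ε)
    (hB : BddBelow (range fun h => g (y₀ + A h) + ε * ‖h‖)) :
    IsGreatest {r : ℝ | ∃ ys : Y →L[ℝ] ℝ, (∀ y, ys y ≤ g y) ∧ ‖ys.comp A‖ ≤ ε ∧ r = ys y₀}
      (penalizedInf g (fun h => ε * ‖h‖) (A : Z →ₗ[ℝ] Y) y₀) := by
  obtain ⟨f, hfg, hfA, hf₀⟩ :=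
    exists_linearMap_eq_penalizedInf (A := (A : Z →ₗ[ℝ] Y)) hg (isSublinear_const_mul_norm hε) hB
  have hg₀ : Tendsto g (𝓝 0) (𝓝 0) := hg.map_zero ▸ hgc
  let ys : Y →L[ℝ] ℝ := ⟨f, f.continuous_of_le hg₀ hfg⟩
  refine ⟨⟨ys, hfg, (ys.comp A).opNorm_le_iff_neg_le hε |>.2 hfA, hf₀.symm⟩, fun r hr => ?_⟩
  exact le_ciInf fun h => dual_subset_lowerBounds_primal hε hr ⟨h, rfl⟩

end Minimax

theorem sublinear_minimax_general
    {Y Z : Type*} [NormedAddCommGroup Y] [NormedSpace ℝ Y]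
    [NormedAddCommGroup Z] [NormedSpace ℝ Z]
    (g : Y → ℝ) (hgc : Continuous g)
    (hgh : ∀ c : ℝ, 0 ≤ c → ∀ y : Y, g (c • y) = c * g y)
    (hga : ∀ y z : Y, g (y + z) ≤ g y + g z)
    (A : Z →L[ℝ] Y) (y₀ : Y) (ε : ℝ) (hε : 0 < ε) :
    sInf {r : ℝ | ∃ h : Z, r = g (y₀ + A h) + ε * ‖h‖} =
      sSup {r : ℝ | ∃ ys : Y →L[ℝ] ℝ, (∀ y : Y, ys y ≤ g y) ∧
        ‖ys.comp A‖ ≤ ε ∧ r = ys y₀} := by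
  have hg : IsSublinear g := ⟨fun c hc => hgh c hc.le, hga⟩
  set S := range fun h : Z => g (y₀ + A h) + ε * ‖h‖
  have hS : {r : ℝ | ∃ h : Z, r = g (y₀ + A h) + ε * ‖h‖} = S := by
    ext r; exact exists_congr fun h => eq_comm
  rw [hS]
  by_cases hB : BddBelow S
  · exact (isGreatest_dual_penalizedInf hg hgc.continuousAt hε.le hB).csSup_eq.symm
  · have hT := (dual_subset_lowerBounds_primal (g := g) (A := A) (y₀ := y₀) hε.le).trans_eq
      (not_nonempty_iff_eq_empty.1 hB)
    rw [Real.sInf_of_not_bddBelow hB, subset_empty_iff.1 hT, Real.sSup_empty]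

/-- Minimax identity (16): the infimum of `g (y₀ + A h) + ε ‖h‖` over `h`
equals the supremum of `⟨y*, y₀⟩` over the subgradients `y* ∈ ∂g(0)` whose
adjoint image `A* y*` has norm at most `ε`. -/
theorem sublinear_minimax
    {Y Z : Type*} [NormedAddCommGroup Y] [NormedSpace ℝ Y] [CompleteSpace Y]
    [NormedAddCommGroup Z] [NormedSpace ℝ Z] [CompleteSpace Z]
    (g : Y → ℝ) (hgc : Continuous g)
    (hgh : ∀ c : ℝ, 0 ≤ c → ∀ y : Y, g (c • y) = c * g y)
    (hga : ∀ y z : Y, g (y + z) ≤ g y + g z)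
    (A : Z →L[ℝ] Y) (y₀ : Y) (ε : ℝ) (hε : 0 < ε) :
    sInf {r : ℝ | ∃ h : Z, r = g (y₀ + A h) + ε * ‖h‖} =
      sSup {r : ℝ | ∃ ys : Y →L[ℝ] ℝ, (∀ y : Y, ys y ≤ g y) ∧
        ‖ys.comp A‖ ≤ ε ∧ r = ys y₀} :=
  sublinear_minimax_general g hgc hgh hga A y₀ ε hε
end

section
/- Consider the control system on [0,1]: ẋ₁ = u, ẋ₂ = x₁ sin(2πu), with u(t) ∈ [0,1] and x₁(0) = x₂(0) = 0. The pair x̄ ≡ (0,0), ū ≡ 0 is not a strong local minimum of the cost x₂(1): for every ε > 0 there exists a measurable control u with values in [0,1] whose trajectory x satisfies |x(t)| < ε for all t ∈ [0,1] and x₂(1) < 0. -/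
/-!
Switch the control on at the value `3/4` for a short time `c` and then off. While it is on,
`sin (2π u) = -1` and `x₁ (s) = 3s/4 > 0`, so `x₂` decreases, to `x₂ = -3/8 · min(t, c)²`; once it
is off, `sin (2π u) = 0` and the trajectory freezes. Both coordinates are `O(c)`, so taking `c`
small keeps the trajectory `ε`-close to zero while `x₂ (1) < 0`.
-/

open Set MeasureTheory intervalIntegral Real

theorem intervalIntegral_indicator_Iic {E : Type*} [NormedAddCommGroup E] [NormedSpace ℝ E]
    (f : ℝ → E) {a c t : ℝ} (hc : a ≤ c) (ht : a ≤ t) :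
    ∫ s in a..t, (Iic c).indicator f s = ∫ s in a..min t c, f s := by
  rw [integral_of_le ht, integral_of_le (le_min ht hc), setIntegral_indicator measurableSet_Iic,
    Ioc_inter_Iic]

theorem sin_two_pi_mul_three_quarters : sin (2 * π * (3 / 4)) = -1 := by
  rw [show 2 * π * (3 / 4) = π / 2 + π by ring, sin_add_pi, sin_pi_div_two]

namespace SwitchControl

noncomputable def control (c : ℝ) : ℝ → ℝ :=
  (Iic c).indicator fun _ => 3 / 4

variable {c : ℝ}

theorem measurable_control : Measurable (control c) :=
  measurable_const.indicator measurableSet_Iic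

theorem control_mem_Icc (s : ℝ) : control c s ∈ Icc (0 : ℝ) 1 := by
  unfold control
  by_cases hs : s ∈ Iic c
  · rw [indicator_of_mem hs]; norm_num
  · rw [indicator_of_notMem hs]; norm_num

theorem integral_control (hc : 0 ≤ c) {t : ℝ} (ht : 0 ≤ t) :
    ∫ s in (0 : ℝ)..t, control c s = 3 / 4 * min t c := by
  rw [control, intervalIntegral_indicator_Iic _ hc ht, intervalIntegral.integral_const,
    smul_eq_mul, sub_zero, mul_comm]

theorem integral_control_mul_sin_eq_indicator (hc : 0 ≤ c) {s : ℝ} (hs : 0 ≤ s) :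
    (∫ r in (0 : ℝ)..s, control c r) * sin (2 * π * control c s) =
      (Iic c).indicator (fun r => -(3 / 4) * r) s := by
  rw [integral_control hc hs]
  by_cases hsc : s ∈ Iic c
  · rw [control, indicator_of_mem hsc, indicator_of_mem hsc, sin_two_pi_mul_three_quarters,
      min_eq_left (show s ≤ c from hsc)]
    ring
  · rw [control, indicator_of_notMem hsc, indicator_of_notMem hsc, mul_zero, sin_zero, mul_zero]

theorem integral_integral_control_mul_sin (hc : 0 ≤ c) {t : ℝ} (ht : 0 ≤ t) :
    ∫ s in (0 : ℝ)..t, (∫ r in (0 : ℝ)..s, control c r) * sin (2 * π * control c s) =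
      -(3 / 8) * min t c ^ 2 := by
  have hcongr : EqOn
      (fun s => (∫ r in (0 : ℝ)..s, control c r) * sin (2 * π * control c s))
      ((Iic c).indicator fun r => -(3 / 4) * r) (uIoc 0 t) := fun s hs =>
    integral_control_mul_sin_eq_indicator hc (uIoc_of_le ht ▸ hs).1.le
  rw [integral_congr_ae (ae_of_all _ hcongr), intervalIntegral_indicator_Iic _ hc ht,
    intervalIntegral.integral_const_mul, integral_id]
  ring

end SwitchControl

open SwitchControl in
/-- Example 5.1, failure of strong minimality: for every `ε > 0` there is a
measurable control with values in `[0,1]` whose trajectory stays within `ε`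
of the zero trajectory and reaches `x₂(1) < 0`. -/
theorem example_not_strong_minimum :
    ∀ ε > (0:ℝ), ∃ (u x₁ x₂ : ℝ → ℝ),
      Measurable u ∧ (∀ t ∈ Icc (0:ℝ) 1, u t ∈ Icc (0:ℝ) 1) ∧
      (∀ t ∈ Icc (0:ℝ) 1, x₁ t = ∫ s in (0:ℝ)..t, u s) ∧
      (∀ t ∈ Icc (0:ℝ) 1, x₂ t = ∫ s in (0:ℝ)..t, x₁ s * Real.sin (2 * π * u s)) ∧
      (∀ t ∈ Icc (0:ℝ) 1, |x₁ t| < ε ∧ |x₂ t| < ε) ∧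
      x₂ 1 < 0 := by
  intro ε hε
  obtain ⟨c, hc, hcε, hc1⟩ : ∃ c : ℝ, 0 < c ∧ c ≤ ε / 2 ∧ c ≤ 1 / 2 :=
    ⟨min (ε / 2) (1 / 2), by positivity, min_le_left _ _, min_le_right _ _⟩
  refine ⟨control c, fun t => ∫ s in (0 : ℝ)..t, control c s,
    fun t => ∫ s in (0 : ℝ)..t, (∫ r in (0 : ℝ)..s, control c r) * sin (2 * π * control c s),
    measurable_control, fun t _ => control_mem_Icc t, fun _ _ => rfl, fun _ _ => rfl,
    fun t ht => ?_, ?_⟩ <;> beta_reduce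
  · have hm : 0 ≤ min t c := le_min ht.1 hc.le
    have hmc : min t c ≤ c := min_le_right t c
    rw [integral_control hc.le ht.1, integral_integral_control_mul_sin hc.le ht.1,
      abs_of_nonneg (by positivity), abs_of_nonpos (by nlinarith)]
    constructor <;> nlinarith
  · rw [integral_integral_control_mul_sin hc.le zero_le_one, min_eq_right (by linarith)]
    nlinarith
end

section
/- Let g : Y → ℝ be continuous and sublinear on a Banach space, F₀, F₁, …, F_k : X × W → Y continuous mappings that are continuously differentiable near (x̄, ū), and suppose J(x, u, α₁,…,α_k) = g(F₀(x,u) + Σ α_i F_i(x,u)) has a local minimum on X × {ū} × ℝ₊^k at (x̄, 0,…,0). Then there exists y* ∈ ∂g(F₀(x̄, ū)) such that (y* ∘ F₀)_x'(x̄, ū) = 0 and ⟨y*, F_i(x̄, ū)⟩ ≥ 0 for i = 1,…,k. -/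
/-!
Along the curve `t ↦ (x̄ + t • h, t • a)`, `t ≥ 0`, the argument of `g` in `J` has right derivative
`w = D (h, 0) + ∑ i, a i • F i (x̄, ū)` at `0`. As `g` is convex and Lipschitz, local minimality
then forces `g ȳ ≤ g (ȳ + w)` for every `w` in the cone `K` of these linearized variations,
`ȳ = F₀ (x̄, ū)`. A Hahn–Banach functional dominated by the sublinear function
`v ↦ inf {g (v + w + s • ȳ) - s * g ȳ | w ∈ K, s ≥ 0}` is a subgradient of `g` at `ȳ` that is
nonnegative on `K`; since `K` contains `± D (h, 0)` and every `F i (x̄, ū)`, it is the multiplier.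
-/

open Set Filter Topology
open scoped NNReal

section Algebraic

variable {E : Type*} [AddCommGroup E] [Module ℝ E]

theorem convexOn_univ_of_sublinear {g : E → ℝ}
    (hgh : ∀ c : ℝ, 0 ≤ c → ∀ y : E, g (c • y) = c * g y)
    (hga : ∀ y z : E, g (y + z) ≤ g y + g z) : ConvexOn ℝ univ g :=
  ⟨convex_univ, fun x _ y _ a b ha hb _ => (hga _ _).trans_eq (by rw [hgh a ha, hgh b hb]; rfl)⟩

variable {p : E → ℝ} {K : PointedCone ℝ E} {y : E}

/-- For sublinear `p`, `p (v + s • y) - s * p y` is the difference quotient of `p` at `y` in the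
direction `v` with step `1 / s`; this is the directional derivative of `p` at `y`, further
minimised over translations of `v` by the cone `K`. -/
noncomputable def coneDirDeriv (p : E → ℝ) (K : PointedCone ℝ E) (y v : E) : ℝ :=
  ⨅ z : K × ℝ≥0, p (v + z.1 + z.2 • y) - z.2 * p y

theorem mul_le_map_add_smul_of_le_add (hph : ∀ c : ℝ, 0 ≤ c → ∀ v : E, p (c • v) = c * p v)
    (hpa : ∀ v w : E, p (v + w) ≤ p v + p w) (hK : ∀ w ∈ K, p y ≤ p (y + w))
    {w : E} (hw : w ∈ K) (s : ℝ≥0) : s * p y ≤ p (w + s • y) := by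
  rcases eq_or_ne s 0 with rfl | hs
  · simpa using (hK w hw).trans (hpa y w)
  · have hs' : (0 : ℝ) < s := NNReal.coe_pos.2 (pos_iff_ne_zero.2 hs)
    have hw' : w + s • y = (s : ℝ) • (y + (s⁻¹ : ℝ≥0) • w) := by
      rw [NNReal.smul_def, NNReal.smul_def, smul_add, smul_smul, NNReal.coe_inv,
        mul_inv_cancel₀ hs'.ne', one_smul, add_comm]
    rw [hw', hph _ hs'.le]
    exact mul_le_mul_of_nonneg_left (hK _ (K.smul_mem (s⁻¹).2 hw)) hs'.le

theorem neg_map_neg_le_coneDirDeriv_term (hph : ∀ c : ℝ, 0 ≤ c → ∀ v : E, p (c • v) = c * p v)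
    (hpa : ∀ v w : E, p (v + w) ≤ p v + p w) (hK : ∀ w ∈ K, p y ≤ p (y + w))
    (v : E) (z : K × ℝ≥0) : -p (-v) ≤ p (v + z.1 + z.2 • y) - z.2 * p y := by
  have h := hpa (v + z.1 + z.2 • y) (-v)
  rw [show v + z.1 + z.2 • y + -v = z.1 + z.2 • y by abel] at h
  linarith [mul_le_map_add_smul_of_le_add hph hpa hK z.1.2 z.2]

theorem bddBelow_coneDirDeriv (hph : ∀ c : ℝ, 0 ≤ c → ∀ v : E, p (c • v) = c * p v)
    (hpa : ∀ v w : E, p (v + w) ≤ p v + p w) (hK : ∀ w ∈ K, p y ≤ p (y + w)) (v : E) :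
    BddBelow (range fun z : K × ℝ≥0 => p (v + z.1 + z.2 • y) - z.2 * p y) :=
  ⟨_, forall_mem_range.2 (neg_map_neg_le_coneDirDeriv_term hph hpa hK v)⟩

theorem coneDirDeriv_le (hph : ∀ c : ℝ, 0 ≤ c → ∀ v : E, p (c • v) = c * p v)
    (hpa : ∀ v w : E, p (v + w) ≤ p v + p w) (hK : ∀ w ∈ K, p y ≤ p (y + w))
    (v : E) (z : K × ℝ≥0) : coneDirDeriv p K y v ≤ p (v + z.1 + z.2 • y) - z.2 * p y :=
  ciInf_le (bddBelow_coneDirDeriv hph hpa hK v) z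

theorem coneDirDeriv_smul_le (hph : ∀ c : ℝ, 0 ≤ c → ∀ v : E, p (c • v) = c * p v)
    (hpa : ∀ v w : E, p (v + w) ≤ p v + p w) (hK : ∀ w ∈ K, p y ≤ p (y + w))
    (c : ℝ≥0) (v : E) : coneDirDeriv p K y (c • v) ≤ c * coneDirDeriv p K y v := by
  unfold coneDirDeriv
  rw [Real.mul_iInf_of_nonneg c.coe_nonneg]
  refine le_ciInf fun z => (coneDirDeriv_le hph hpa hK _
    (⟨(c : ℝ) • (z.1 : E), K.smul_mem c.coe_nonneg z.1.2⟩, c * z.2)).trans_eq ?_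
  have hcv : c • v + (c : ℝ) • (z.1 : E) + (c * z.2) • y = (c : ℝ) • (v + z.1 + z.2 • y) := by
    simp only [smul_add, NNReal.smul_def, mul_smul]
  rw [hcv, hph _ c.coe_nonneg, NNReal.coe_mul]
  ring

theorem coneDirDeriv_smul (hph : ∀ c : ℝ, 0 ≤ c → ∀ v : E, p (c • v) = c * p v)
    (hpa : ∀ v w : E, p (v + w) ≤ p v + p w) (hK : ∀ w ∈ K, p y ≤ p (y + w))
    {c : ℝ} (hc : 0 < c) (v : E) : coneDirDeriv p K y (c • v) = c * coneDirDeriv p K y v := by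
  lift c to ℝ≥0 using hc.le
  refine le_antisymm (coneDirDeriv_smul_le hph hpa hK c v) ?_
  have h := coneDirDeriv_smul_le hph hpa hK c⁻¹ (c • v)
  rw [inv_smul_smul₀ (by exact_mod_cast hc.ne'), NNReal.coe_inv] at h
  rwa [← le_inv_mul_iff₀ hc]

theorem coneDirDeriv_add_le (hph : ∀ c : ℝ, 0 ≤ c → ∀ v : E, p (c • v) = c * p v)
    (hpa : ∀ v w : E, p (v + w) ≤ p v + p w) (hK : ∀ w ∈ K, p y ≤ p (y + w)) (v₁ v₂ : E) :
    coneDirDeriv p K y (v₁ + v₂) ≤ coneDirDeriv p K y v₁ + coneDirDeriv p K y v₂ := by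
  refine le_ciInf_add_ciInf fun z₁ z₂ => (coneDirDeriv_le hph hpa hK _ (z₁ + z₂)).trans ?_
  have h := hpa (v₁ + z₁.1 + z₁.2 • y) (v₂ + z₂.1 + z₂.2 • y)
  have hz : v₁ + z₁.1 + z₁.2 • y + (v₂ + z₂.1 + z₂.2 • y)
      = v₁ + v₂ + ((z₁ + z₂).1 : E) + (z₁ + z₂).2 • y := by
    simp only [Prod.fst_add, Prod.snd_add, Submodule.coe_add, add_smul]
    abel
  rw [hz] at h
  simp only [Prod.snd_add, NNReal.coe_add] at h ⊢
  linarith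

theorem exists_linearMap_le_eq_nonneg_of_le_add
    (hph : ∀ c : ℝ, 0 ≤ c → ∀ v : E, p (c • v) = c * p v)
    (hpa : ∀ v w : E, p (v + w) ≤ p v + p w) (hK : ∀ w ∈ K, p y ≤ p (y + w)) :
    ∃ f : E →ₗ[ℝ] ℝ, (∀ v, f v ≤ p v) ∧ f y = p y ∧ ∀ w ∈ K, 0 ≤ f w := by
  have hp0 : p 0 = 0 := by simpa using hph 0 le_rfl 0
  have hq0 : 0 ≤ coneDirDeriv p K y 0 :=
    le_ciInf fun z => by simpa [hp0] using neg_map_neg_le_coneDirDeriv_term hph hpa hK 0 z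
  obtain ⟨f, -, hf⟩ := exists_extension_of_le_sublinear ⟨⊥, 0⟩ (coneDirDeriv p K y)
    (fun c hc => coneDirDeriv_smul hph hpa hK hc) (coneDirDeriv_add_le hph hpa hK)
    fun ⟨x, hx⟩ => by rw [Submodule.mem_bot] at hx; subst hx; simpa using hq0
  have hq := coneDirDeriv_le hph hpa hK (p := p)
  have hle : ∀ v, f v ≤ p v := fun v => (hf v).trans (by simpa using hq v 0)
  refine ⟨f, hle, le_antisymm (hle y) ?_, fun w hw => ?_⟩
  · simpa [hp0] using (hf (-y)).trans (hq (-y) (0, 1))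
  · simpa [hp0] using (hf (-w)).trans (hq (-w) (⟨w, hw⟩, 0))

end Algebraic

section Normed

variable {E : Type*} [NormedAddCommGroup E] [NormedSpace ℝ E] {g : E → ℝ}

theorem exists_le_mul_norm_of_sublinear (hgc : Continuous g)
    (hgh : ∀ c : ℝ, 0 ≤ c → ∀ y : E, g (c • y) = c * g y)
    (hga : ∀ y z : E, g (y + z) ≤ g y + g z) : ∃ C, ∀ v, g v ≤ C * ‖v‖ := by
  have hg0 : g 0 = 0 := by simpa using hgh 0 le_rfl 0
  have smul_le : ∀ (r : ℝ) (v : E), max (g (r • v)) (g (-(r • v))) ≤ ‖r‖ * max (g v) (g (-v)) := by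
    intro r v
    rcases le_total 0 r with hr | hr
    · rw [← smul_neg, hgh r hr, hgh r hr, ← mul_max_of_nonneg _ _ hr, Real.norm_of_nonneg hr]
    · have h := hgh (-r) (neg_nonneg.2 hr)
      rw [show r • v = (-r) • -v by simp, ← smul_neg, neg_neg, h, h,
        ← mul_max_of_nonneg _ _ (neg_nonneg.2 hr), max_comm, Real.norm_of_nonpos hr]
  let q : Seminorm ℝ E := .ofSMulLE (fun v => max (g v) (g (-v))) (by simp [hg0])
    (fun v w => max_le ((hga v w).trans (add_le_add (le_max_left _ _) (le_max_left _ _)))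
      ((neg_add v w ▸ hga _ _).trans (add_le_add (le_max_right _ _) (le_max_right _ _)))) smul_le
  obtain ⟨C, -, hC⟩ := q.bound_of_continuous_normedSpace (hgc.max (hgc.comp continuous_neg))
  exact ⟨C, fun v => (le_max_left _ _).trans (hC v)⟩

theorem exists_lipschitzWith_of_sublinear (hgc : Continuous g)
    (hgh : ∀ c : ℝ, 0 ≤ c → ∀ y : E, g (c • y) = c * g y)
    (hga : ∀ y z : E, g (y + z) ≤ g y + g z) : ∃ C, LipschitzWith C g := by
  obtain ⟨C, hC⟩ := exists_le_mul_norm_of_sublinear hgc hgh hga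
  refine ⟨_, LipschitzWith.of_le_add_mul' C fun u v => ?_⟩
  calc g u = g (v + (u - v)) := by rw [add_sub_cancel]
    _ ≤ g v + C * dist u v := (hga _ _).trans (by rw [dist_eq_norm]; linarith [hC (u - v)])

theorem exists_subgradient_nonneg_of_le_add (hgc : Continuous g)
    (hgh : ∀ c : ℝ, 0 ≤ c → ∀ y : E, g (c • y) = c * g y)
    (hga : ∀ y z : E, g (y + z) ≤ g y + g z) {K : PointedCone ℝ E} {y : E}
    (hK : ∀ w ∈ K, g y ≤ g (y + w)) :
    ∃ ys : E →L[ℝ] ℝ, (∀ z, ys (z - y) ≤ g z - g y) ∧ ∀ w ∈ K, 0 ≤ ys w := by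
  obtain ⟨f, hfg, hfy, hfK⟩ := exists_linearMap_le_eq_nonneg_of_le_add hgh hga hK
  obtain ⟨C, hC⟩ := exists_le_mul_norm_of_sublinear hgc hgh hga
  have hbound : ∀ v, ‖f v‖ ≤ C * ‖v‖ := fun v => by
    rw [Real.norm_eq_abs, abs_le]
    refine ⟨?_, (hfg v).trans (hC v)⟩
    have h := (hfg (-v)).trans (hC (-v))
    rw [map_neg, norm_neg] at h
    linarith
  refine ⟨f.mkContinuous C hbound, fun z => ?_, hfK⟩
  simpa [hfy] using hfg z

end Normed

theorem ConvexOn.le_of_eventually_le_add_mul {h : ℝ → ℝ} (hh : ConvexOn ℝ (Icc 0 1) h)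
    (hε : ∀ ε > 0, ∀ᶠ t in 𝓝[>] 0, h 0 ≤ h t + ε * t) : h 0 ≤ h 1 := by
  refine le_of_forall_pos_le_add fun ε hε₀ => ?_
  obtain ⟨t, hle, ht₀, ht₁⟩ := ((hε ε hε₀).and (Ioc_mem_nhdsGT zero_lt_one)).exists
  have hconv := hh.2 (left_mem_Icc.2 zero_le_one) (right_mem_Icc.2 zero_le_one)
    (sub_nonneg.2 ht₁) ht₀.le (sub_add_cancel 1 t)
  simp only [smul_eq_mul, mul_zero, mul_one, zero_add] at hconv
  nlinarith

theorem ConvexOn.le_map_add_of_isLocalMinOn_comp {E : Type*} [NormedAddCommGroup E]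
    [NormedSpace ℝ E] {g : E → ℝ} {C : ℝ≥0} (hg : ConvexOn ℝ univ g) (hgC : LipschitzWith C g)
    {φ : ℝ → E} {w : E} (hφ : HasDerivWithinAt φ w (Ici 0) 0)
    (hmin : IsLocalMinOn (g ∘ φ) (Ici 0) 0) : g (φ 0) ≤ g (φ 0 + w) := by
  have hline : ∀ t : ℝ, AffineMap.lineMap (φ 0) (φ 0 + w) t = φ 0 + t • w := fun t => by
    rw [AffineMap.lineMap_apply, vsub_eq_sub, vadd_eq_add, add_sub_cancel_left, add_comm]
  have hconv := (hg.comp_affineMap (AffineMap.lineMap (φ 0) (φ 0 + w))).subset (subset_univ _)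
    (convex_Icc 0 1)
  suffices hε : ∀ ε > 0, ∀ᶠ t in 𝓝[>] 0, g (φ 0) ≤ g (φ 0 + t • w) + ε * t by
    simpa [hline] using hconv.le_of_eventually_le_add_mul (by simpa [hline] using hε)
  intro ε hε
  have hO : (fun t => g (φ t) - g (φ 0 + t • w)) =O[𝓝[Ici 0] 0]
      fun t => φ t - φ 0 - (t - 0) • w :=
    .of_bound C <| .of_forall fun t => by
      rw [← dist_eq_norm, sub_zero, sub_sub, ← dist_eq_norm]
      exact hgC.dist_le_mul _ _
  have ho := (hO.trans_isLittleO hφ.isLittleO).def hε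
  filter_upwards [nhdsWithin_mono _ Ioi_subset_Ici_self ho,
    nhdsWithin_mono _ Ioi_subset_Ici_self hmin, self_mem_nhdsWithin] with t hdiff hφt (ht : 0 < t)
  rw [sub_zero, Real.norm_of_nonneg ht.le, Real.norm_eq_abs] at hdiff
  linarith [le_abs_self (g (φ t) - g (φ 0 + t • w)), show g (φ 0) ≤ g (φ t) from hφt]

theorem HasDerivAt.smul_continuousAt_of_eq_zero {𝕜 F : Type*} [NontriviallyNormedField 𝕜]
    [NormedAddCommGroup F] [NormedSpace 𝕜 F] {u : 𝕜 → 𝕜} {u' x : 𝕜} {f : 𝕜 → F}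
    (hu : HasDerivAt u u' x) (hux : u x = 0) (hf : ContinuousAt f x) :
    HasDerivAt (fun t => u t • f t) (u' • f x) x := by
  rw [hasDerivAt_iff_tendsto_slope] at hu ⊢
  refine (hu.smul (hf.tendsto.mono_left nhdsWithin_le_nhds)).congr fun t => ?_
  simp only [slope_def_module, hux, sub_zero, zero_smul, smul_smul, smul_eq_mul]

section Model

variable {X W Y ι : Type*}

section LinearizedCone

variable [AddCommGroup X] [Module ℝ X] [AddCommGroup Y] [Module ℝ Y]

def linearizedCone (A : X →ₗ[ℝ] Y) (v : ι → Y) : PointedCone ℝ Y :=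
  PointedCone.ofSubmodule (LinearMap.range A) ⊔ PointedCone.hull ℝ (range v)

theorem mem_linearizedCone [Fintype ι] {A : X →ₗ[ℝ] Y} {v : ι → Y} {w : Y} :
    w ∈ linearizedCone A v ↔ ∃ h, ∃ c : ι → ℝ, 0 ≤ c ∧ A h + ∑ i, c i • v i = w := by
  simp only [linearizedCone, Submodule.mem_sup, PointedCone.mem_ofSubmodule_iff,
    LinearMap.mem_range, Submodule.mem_span_range_iff_exists_fun]
  constructor
  · rintro ⟨_, ⟨h, rfl⟩, _, ⟨c, rfl⟩, rfl⟩
    exact ⟨h, fun i => c i, fun i => (c i).2, rfl⟩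
  · rintro ⟨h, c, hc, rfl⟩
    exact ⟨_, ⟨h, rfl⟩, _, ⟨fun i => ⟨c i, hc i⟩, rfl⟩, rfl⟩

end LinearizedCone

variable [NormedAddCommGroup X] [NormedSpace ℝ X] [NormedAddCommGroup W] [NormedSpace ℝ W]
  [NormedAddCommGroup Y] [NormedSpace ℝ Y]

theorem map_le_map_add_linearization_of_isLocalMinOn [Fintype ι] {g : Y → ℝ} {C : ℝ≥0}
    (hg : ConvexOn ℝ univ g) (hgC : LipschitzWith C g) {F₀ : X × W → Y} {F : ι → X × W → Y}
    {xb : X} {ub : W} {D : X × W →L[ℝ] Y} (hD : HasFDerivAt F₀ D (xb, ub))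
    (hF : ∀ i, ContinuousAt (F i) (xb, ub))
    (hmin : IsLocalMinOn (fun p : X × (ι → ℝ) => g (F₀ (p.1, ub) + ∑ i, p.2 i • F i (p.1, ub)))
      (univ ×ˢ Ici 0) (xb, 0))
    (h : X) {a : ι → ℝ} (ha : 0 ≤ a) :
    g (F₀ (xb, ub)) ≤ g (F₀ (xb, ub) + (D (h, 0) + ∑ i, a i • F i (xb, ub))) := by
  let ψ : ℝ → X × (ι → ℝ) := fun t => (xb + t • h, t • a)
  let γ : ℝ → X × W := fun t => (xb + t • h, ub)
  have hγ : HasDerivAt γ (h, 0) 0 := by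
    simpa using (((hasDerivAt_id (0 : ℝ)).smul_const h).const_add xb).prodMk (hasDerivAt_const 0 ub)
  have hγ0 : γ 0 = (xb, ub) := by simp [γ]
  have hφ : HasDerivAt (fun t => F₀ (γ t) + ∑ i, (t * a i) • F i (γ t))
      (D (h, 0) + ∑ i, a i • F i (xb, ub)) 0 := by
    refine (hD.comp_hasDerivAt_of_eq 0 hγ hγ0.symm).add (HasDerivAt.fun_sum fun i _ => ?_)
    simpa [hγ0] using (hasDerivAt_mul_const (a i)).smul_continuousAt_of_eq_zero (zero_mul _)
      ((hF i).comp_of_eq hγ.continuousAt hγ0)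
  have hloc : IsLocalMinOn (fun t => g (F₀ (γ t) + ∑ i, (t * a i) • F i (γ t))) (Ici 0) 0 := by
    refine (show ψ 0 = (xb, 0) by simp [ψ]) ▸ hmin |>.comp_continuousOn (g := ψ) ?_ ?_ self_mem_Ici
    · exact fun t (ht : 0 ≤ t) => ⟨mem_univ _, smul_nonneg ht ha⟩
    · fun_prop
  simpa [hγ0] using hg.le_map_add_of_isLocalMinOn_comp hgC hφ.hasDerivWithinAt hloc

end Model

theorem first_order_multiplier_condition_general
    {X W Y : Type*} [NormedAddCommGroup X] [NormedSpace ℝ X]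
    [NormedAddCommGroup W] [NormedSpace ℝ W]
    [NormedAddCommGroup Y] [NormedSpace ℝ Y]
    (g : Y → ℝ) (hgc : Continuous g)
    (hgh : ∀ c : ℝ, 0 ≤ c → ∀ y : Y, g (c • y) = c * g y)
    (hga : ∀ y z : Y, g (y + z) ≤ g y + g z)
    (k : ℕ) (F₀ : X × W → Y) (F : Fin k → X × W → Y)
    (xb : X) (ub : W)
    (hFc : ∀ i, Continuous (F i))
    (D : (X × W) →L[ℝ] Y) (hD : HasFDerivAt F₀ D (xb, ub))
    (hmin : ∃ ρ > (0:ℝ), ∀ (x : X) (a : Fin k → ℝ), (∀ i, 0 ≤ a i) →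
      ‖x - xb‖ < ρ → (∀ i, a i < ρ) →
      g (F₀ (xb, ub)) ≤ g (F₀ (x, ub) + ∑ i, a i • F i (x, ub))) :
    ∃ ys : Y →L[ℝ] ℝ,
      (∀ z : Y, ys (z - F₀ (xb, ub)) ≤ g z - g (F₀ (xb, ub))) ∧
      (∀ h : X, ys (D (h, 0)) = 0) ∧
      (∀ i : Fin k, 0 ≤ ys (F i (xb, ub))) := by
  have hJ : IsLocalMinOn (fun p : X × (Fin k → ℝ) => g (F₀ (p.1, ub) + ∑ i, p.2 i • F i (p.1, ub)))
      (univ ×ˢ Ici 0) (xb, 0) := by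
    obtain ⟨ρ, hρ, hm⟩ := hmin
    filter_upwards [nhdsWithin_le_nhds (Metric.ball_mem_nhds _ hρ), self_mem_nhdsWithin]
      with ⟨x, a⟩ hxa ha
    rw [Metric.mem_ball, Prod.dist_eq, max_lt_iff, dist_eq_norm, dist_pi_lt_iff hρ] at hxa
    simpa using hm x a ha.2 hxa.1 fun i => (le_abs_self _).trans_lt (by simpa using hxa.2 i)
  obtain ⟨C, hgC⟩ := exists_lipschitzWith_of_sublinear hgc hgh hga
  let Dx : X →L[ℝ] Y := D.comp (.inl ℝ X W)
  have hK : ∀ w ∈ linearizedCone (Dx : X →ₗ[ℝ] Y) (fun i => F i (xb, ub)),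
      g (F₀ (xb, ub)) ≤ g (F₀ (xb, ub) + w) := by
    intro w hw
    obtain ⟨h, c, hc, rfl⟩ := mem_linearizedCone.1 hw
    exact map_le_map_add_linearization_of_isLocalMinOn (convexOn_univ_of_sublinear hgh hga) hgC
      hD (fun i => (hFc i).continuousAt) hJ h hc
  obtain ⟨ys, hsub, hnonneg⟩ := exists_subgradient_nonneg_of_le_add hgc hgh hga hK
  have hDx : ∀ h, 0 ≤ ys (Dx h) := fun h => hnonneg _ (Submodule.mem_sup_left ⟨h, rfl⟩)
  refine ⟨ys, hsub, fun h => le_antisymm ?_ (hDx h),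
    fun i => hnonneg _ (Submodule.mem_sup_right (Submodule.subset_span ⟨i, rfl⟩))⟩
  have h' := hDx (-h)
  rwa [map_neg, map_neg, neg_nonneg] at h'

/-- The first-order multiplier condition (13) for the basic unconstrained
model of Section 5.1: if `J(x,u,α) = g(F₀(x,u) + Σ αᵢ Fᵢ(x,u))` has a local
minimum on `X × {ū} × ℝ₊^k` at `(x̄, ū, 0)`, then some subgradient
`y* ∈ ∂g(F₀(x̄,ū))` annihilates the partial `x`-derivative of `y* ∘ F₀` and
pairs nonnegatively with each `Fᵢ(x̄,ū)`. -/
theorem first_order_multiplier_condition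
    {X W Y : Type*} [NormedAddCommGroup X] [NormedSpace ℝ X]
    [NormedAddCommGroup W] [NormedSpace ℝ W]
    [NormedAddCommGroup Y] [NormedSpace ℝ Y]
    (g : Y → ℝ) (hgc : Continuous g)
    (hgh : ∀ c : ℝ, 0 ≤ c → ∀ y : Y, g (c • y) = c * g y)
    (hga : ∀ y z : Y, g (y + z) ≤ g y + g z)
    (k : ℕ) (F₀ : X × W → Y) (F : Fin k → X × W → Y)
    (xb : X) (ub : W)
    (hF₀c : Continuous F₀) (hFc : ∀ i, Continuous (F i))
    (D : (X × W) →L[ℝ] Y) (hD : HasFDerivAt F₀ D (xb, ub))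
    (hmin : ∃ ρ > (0:ℝ), ∀ (x : X) (a : Fin k → ℝ), (∀ i, 0 ≤ a i) →
      ‖x - xb‖ < ρ → (∀ i, a i < ρ) →
      g (F₀ (xb, ub)) ≤ g (F₀ (x, ub) + ∑ i, a i • F i (x, ub))) :
    ∃ ys : Y →L[ℝ] ℝ,
      (∀ z : Y, ys (z - F₀ (xb, ub)) ≤ g z - g (F₀ (xb, ub))) ∧
      (∀ h : X, ys (D (h, 0)) = 0) ∧
      (∀ i : Fin k, 0 ≤ ys (F i (xb, ub))) :=
  first_order_multiplier_condition_general g hgc hgh hga k F₀ F xb ub hFc D hD hmin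
end
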